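/- arXiv:2103.06627 — 4 statements merged into one kernel-verified Lean document; each statement's English description precedes it below -/
import Mathlib

section
/- Let A : ℝ → ℝ be concave and twice differentiable, B > 0, and g : ℝ → ℝ strictly convex and twice differentiable, λ > 0. Then the function L(a) = -log(e^{A(a)} / (e^{A(a)} + B)) + λ·g(a) is strictly convex. -/
/-!
With `φ t = -log (eᵗ / (eᵗ + B)) = log (eᵗ + B) - t` we have `L = φ ∘ A + λ g`. Since
`φ' t = -B / (eᵗ + B)` is nonpositive and increasing, `φ` is convex and nonincreasing, so `φ ∘ A`
is convex for concave `A`; adding the strictly convex `λ g` gives strict convexity.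
-/

open Real Set

lemma concaveOn_univ_of_hasDerivAt2_nonpos {f f' f'' : ℝ → ℝ}
    (hf' : ∀ x, HasDerivAt f (f' x) x) (hf'' : ∀ x, HasDerivAt f' (f'' x) x)
    (hf''_nonpos : ∀ x, f'' x ≤ 0) : ConcaveOn ℝ univ f :=
  Antitone.concaveOn_univ_of_deriv (fun x => (hf' x).differentiableAt)
    (by rw [deriv_eq hf']; exact antitone_of_hasDerivAt_nonpos hf'' hf''_nonpos)

lemma strictConvexOn_univ_of_hasDerivAt2_pos {f f' f'' : ℝ → ℝ}
    (hf' : ∀ x, HasDerivAt f (f' x) x) (hf'' : ∀ x, HasDerivAt f' (f'' x) x)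
    (hf''_pos : ∀ x, 0 < f'' x) : StrictConvexOn ℝ univ f :=
  StrictMono.strictConvexOn_univ_of_deriv
    (continuous_iff_continuousAt.2 fun x => (hf' x).continuousAt)
    (by rw [deriv_eq hf']; exact strictMono_of_hasDerivAt_pos hf'' hf''_pos)

lemma hasDerivAt_neg_log_exp_div_exp_add {B : ℝ} (hB : 0 ≤ B) (t : ℝ) :
    HasDerivAt (fun t => -log (exp t / (exp t + B))) (-(B / (exp t + B))) t := by
  have hpos : ∀ s, 0 < exp s + B := fun s => by positivity
  have hfun : (fun t => -log (exp t / (exp t + B))) = fun t => log (exp t + B) - t := by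
    funext s
    rw [log_div (exp_ne_zero s) (hpos s).ne', log_exp, neg_sub]
  have hderiv : exp t / (exp t + B) - 1 = -(B / (exp t + B)) := by
    field_simp [(hpos t).ne']
    ring
  rw [hfun, ← hderiv]
  exact (((hasDerivAt_exp t).add_const B).log (hpos t).ne').sub (hasDerivAt_id t)

lemma convexOn_neg_log_exp_div_exp_add {B : ℝ} (hB : 0 ≤ B) :
    ConvexOn ℝ univ (fun t => -log (exp t / (exp t + B))) := by
  refine Monotone.convexOn_univ_of_deriv
    (fun t => (hasDerivAt_neg_log_exp_div_exp_add hB t).differentiableAt) ?_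
  rw [deriv_eq (hasDerivAt_neg_log_exp_div_exp_add hB)]
  intro s t hst
  exact neg_le_neg (div_le_div_of_nonneg_left hB (by positivity) (by gcongr))

lemma antitone_neg_log_exp_div_exp_add {B : ℝ} (hB : 0 ≤ B) :
    Antitone (fun t => -log (exp t / (exp t + B))) :=
  antitone_of_hasDerivAt_nonpos (hasDerivAt_neg_log_exp_div_exp_add hB)
    fun t => neg_nonpos.2 (by positivity)

theorem stmt1 (A A' A'' g g' g'' : ℝ → ℝ) (B lam : ℝ)
    (hB : 0 < B) (hlam : 0 < lam)
    (hA' : ∀ x, HasDerivAt A (A' x) x)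
    (hA'' : ∀ x, HasDerivAt A' (A'' x) x)
    (hAconc : ∀ x, A'' x ≤ 0)
    (hg' : ∀ x, HasDerivAt g (g' x) x)
    (hg'' : ∀ x, HasDerivAt g' (g'' x) x)
    (hgconv : ∀ x, 0 < g'' x) :
    StrictConvexOn ℝ univ
      (fun a => -Real.log (Real.exp (A a) / (Real.exp (A a) + B)) + lam * g a) := by
  have hA : ConcaveOn ℝ univ A := concaveOn_univ_of_hasDerivAt2_nonpos hA' hA'' hAconc
  have hrange : Convex ℝ (A '' univ) :=
    (isPreconnected_univ.image A fun x _ => (hA' x).continuousAt.continuousWithinAt).convex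
  have hloss : ConvexOn ℝ univ (fun a => -log (exp (A a) / (exp (A a) + B))) :=
    ((convexOn_neg_log_exp_div_exp_add hB.le).subset (subset_univ _) hrange).comp_concaveOn hA
      ((antitone_neg_log_exp_div_exp_add hB.le).antitoneOn _)
  have hreg : StrictConvexOn ℝ univ (fun a => lam * g a) :=
    strictConvexOn_univ_of_hasDerivAt2_pos (fun x => (hg' x).const_mul lam)
      (fun x => (hg'' x).const_mul lam) fun x => mul_pos hlam (hgconv x)
  exact hloss.add_strictConvexOn hreg
end

section
/- Let s > 0, K > 0, B > 0. Suppose m : [l_a, u_a] → ℝ is differentiable with 0 < m'(a) ≤ K, g is differentiable with g'(u_a) = 0 and g'(l_a) < 0, and λ ≥ sK / (-g'(l_a)). Suppose θ + m(a) ∈ (0, π/2] for all a ∈ [l_a, u_a]. Define L(a) = log(1 + B·e^{-s·cos(θ + m(a))}) + λ·g(a). Then L'(u_a) > 0 and L'(l_a) < 0 (in particular, with strict convexity of L, the minimizer lies in the open interval). -/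
/-! At the upper end `g'` vanishes and the loss term of `L'` is strictly positive, since
`m' > 0` and `sin (θ + m) > 0` on `(0, π/2]`. At the lower end the loss term has the form
`t x / (1 + t)` with `x = s sin (θ + m) m' ≤ s K`, so it is `< s K ≤ λ (-g'(l_a))`. -/

open Real Set

theorem hasDerivAt_log_one_add_mul_exp {f : ℝ → ℝ} {f' a B : ℝ} (hf : HasDerivAt f f' a)
    (hB : 0 ≤ B) :
    HasDerivAt (fun x => log (1 + B * exp (f x)))
      (B * exp (f a) * f' / (1 + B * exp (f a))) a := by
  have hpos : 0 < 1 + B * exp (f a) := by positivity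
  simpa only [mul_assoc] using ((hf.exp.const_mul B).const_add 1).log hpos.ne'

theorem hasDerivAt_log_one_add_mul_exp_neg_mul_cos {m : ℝ → ℝ} {m' a B s θ : ℝ}
    (hm : HasDerivAt m m' a) (hB : 0 ≤ B) :
    HasDerivAt (fun x => log (1 + B * exp (-(s * cos (θ + m x)))))
      (B * exp (-(s * cos (θ + m a))) * (s * sin (θ + m a) * m')
        / (1 + B * exp (-(s * cos (θ + m a))))) a := by
  have hcos : HasDerivAt (fun x => -(s * cos (θ + m x))) (s * sin (θ + m a) * m') a :=
    (((hm.const_add θ).cos).const_mul s).neg.congr_deriv (by ring)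
  exact hasDerivAt_log_one_add_mul_exp hcos hB

theorem mul_div_one_add_lt {t x : ℝ} (ht : 0 ≤ t) (hx : 0 < x) : t * x / (1 + t) < x := by
  rw [div_lt_iff₀ (by positivity)]
  nlinarith

theorem stmt4_general (la ua s K B lam θ : ℝ) (m m' g g' : ℝ → ℝ)
    (hlu : la < ua) (hs : 0 < s) (hB : 0 < B)
    (hm : ∀ a, HasDerivAt m (m' a) a)
    (hm' : ∀ a ∈ Icc la ua, 0 < m' a ∧ m' a ≤ K)
    (hg : ∀ a, HasDerivAt g (g' a) a)
    (hgu : g' ua = 0) (hgl : g' la < 0)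
    (hlam : lam ≥ s * K / (-g' la))
    (hrange : ∀ a ∈ Icc la ua, θ + m a ∈ Ioc 0 (π / 2))
    (L : ℝ → ℝ)
    (hL : L = fun a => Real.log (1 + B * Real.exp (-(s * Real.cos (θ + m a)))) + lam * g a) :
    0 < deriv L ua ∧ deriv L la < 0 := by
  have hL' : ∀ a, deriv L a = B * exp (-(s * cos (θ + m a))) * (s * sin (θ + m a) * m' a)
      / (1 + B * exp (-(s * cos (θ + m a)))) + lam * g' a := fun a => by
    subst hL
    exact ((hasDerivAt_log_one_add_mul_exp_neg_mul_cos (hm a) hB.le).add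
      ((hg a).const_mul lam)).deriv
  have hx : ∀ a ∈ Icc la ua, 0 < s * sin (θ + m a) * m' a := fun a ha => by
    have hsin : 0 < sin (θ + m a) :=
      sin_pos_of_mem_Ioo (Ioc_subset_Ioo_right (by linarith [pi_pos]) (hrange a ha))
    have := (hm' a ha).1
    positivity
  have hla : la ∈ Icc la ua := left_mem_Icc.2 hlu.le
  have hua : ua ∈ Icc la ua := right_mem_Icc.2 hlu.le
  constructor
  · rw [hL' ua, hgu, mul_zero, add_zero]
    have := hx ua hua
    positivity
  · have hterm := mul_div_one_add_lt (t := B * exp (-(s * cos (θ + m la)))) (by positivity)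
      (hx la hla)
    have hxK : s * sin (θ + m la) * m' la ≤ s * K := by
      have hsinK : sin (θ + m la) * m' la ≤ 1 * K :=
        mul_le_mul (sin_le_one _) (hm' la hla).2 (hm' la hla).1.le zero_le_one
      rw [mul_assoc]
      exact mul_le_mul_of_nonneg_left (one_mul K ▸ hsinK) hs.le
    have hlamK : s * K ≤ lam * -g' la := (div_le_iff₀ (neg_pos.2 hgl)).1 hlam
    rw [hL' la]
    linarith

theorem stmt4 (la ua s K B lam θ : ℝ) (m m' g g' : ℝ → ℝ)
    (hla : 0 < la) (hlu : la < ua) (hs : 0 < s) (hK : 0 < K) (hB : 0 < B)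
    (hm : ∀ a, HasDerivAt m (m' a) a)
    (hm' : ∀ a ∈ Icc la ua, 0 < m' a ∧ m' a ≤ K)
    (hg : ∀ a, HasDerivAt g (g' a) a)
    (hgu : g' ua = 0) (hgl : g' la < 0)
    (hlam : lam ≥ s * K / (-g' la))
    (hrange : ∀ a ∈ Icc la ua, θ + m a ∈ Ioc 0 (π / 2))
    (L : ℝ → ℝ)
    (hL : L = fun a => Real.log (1 + B * Real.exp (-(s * Real.cos (θ + m a)))) + lam * g a) :
    0 < deriv L ua ∧ deriv L la < 0 :=
  stmt4_general la ua s K B lam θ m m' g g' hlu hs hB hm hm' hg hgu hgl hlam hrange L hL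
end

section
/- Let A : ℝ → ℝ be concave and differentiable, B > 0, λ > 0, and g strictly convex and differentiable. For any a₁ < a₂ in the domain, if L(a) = log(1 + B e^{-A(a)}) + λ g(a), then L'(a₁) < L'(a₂). -/
open Real Set

theorem stmt12 (A A' g g' : ℝ → ℝ) (B lam : ℝ)
    (hB : 0 < B) (hlam : 0 < lam)
    (hA : ∀ x, HasDerivAt A (A' x) x)
    (hA' : Antitone A')
    (hg : ∀ x, HasDerivAt g (g' x) x)
    (hg' : StrictMono g')
    (L : ℝ → ℝ)
    (hL : L = fun a => Real.log (1 + B * Real.exp (-A a)) + lam * g a)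
    (a₁ a₂ : ℝ) (h : a₁ < a₂) :
    deriv L a₁ < deriv L a₂ := by
  have key : ∀ x, HasDerivAt L
      (B * (Real.exp (-A x) * -A' x) / (1 + B * Real.exp (-A x)) + lam * g' x) x := by
    intro x
    subst hL
    have h1 : HasDerivAt (fun a => 1 + B * Real.exp (-A a))
        (B * (Real.exp (-A x) * -A' x)) x :=
      (((hA x).neg.exp).const_mul B).const_add 1
    have hpos : (0:ℝ) < 1 + B * Real.exp (-A x) := by positivity
    exact (h1.log hpos.ne').add ((hg x).const_mul lam)
  have hd : ∀ x, deriv L x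
      = B * (Real.exp (-A x) * -A' x) / (1 + B * Real.exp (-A x)) + lam * g' x :=
    fun x => (key x).deriv
  rw [hd a₁, hd a₂]
  have hgs : lam * g' a₁ < lam * g' a₂ :=
    (mul_lt_mul_iff_right₀ hlam).2 (hg' h)
  -- mean value theorem for A on [a₁, a₂]
  obtain ⟨c, hc, hslope⟩ := exists_hasDerivAt_eq_slope A A' h
    (fun x _ => (hA x).continuousAt.continuousWithinAt) (fun x _ => hA x)
  have hA21 : A a₂ - A a₁ = A' c * (a₂ - a₁) := by
    rw [hslope, div_mul_cancel₀ _ (sub_ne_zero.mpr h.ne')]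
  set e₁ := Real.exp (-A a₁) with he₁
  set e₂ := Real.exp (-A a₂) with he₂
  have he₁pos : 0 < e₁ := Real.exp_pos _
  have he₂pos : 0 < e₂ := Real.exp_pos _
  have hp₁ : (0:ℝ) < 1 + B * e₁ := by positivity
  have hp₂ : (0:ℝ) < 1 + B * e₂ := by positivity
  have hA'12 : A' a₂ ≤ A' a₁ := hA' h.le
  have hterm : B * (e₁ * -A' a₁) / (1 + B * e₁) ≤ B * (e₂ * -A' a₂) / (1 + B * e₂) := by
    rw [div_le_div_iff₀ hp₁ hp₂]
    rcases lt_or_ge (A' a₁) 0 with h1 | h1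
    · -- A' a₁ < 0 : A decreasing on [a₁,a₂], e₂ ≥ e₁
      have hAc : A' c ≤ A' a₁ := hA' hc.1.le
      have hAlt : A a₂ < A a₁ := by nlinarith
      have he : e₁ ≤ e₂ := Real.exp_le_exp.2 (by linarith)
      have h3 : e₁ * (1 + B * e₂) ≤ e₂ * (1 + B * e₁) := by nlinarith
      have hn : -A' a₁ ≤ -A' a₂ := by linarith
      have := mul_le_mul hn h3 (by positivity) (by linarith)
      nlinarith
    · rcases le_or_gt (A' a₂) 0 with h2 | h2
      · -- mixed signs: LHS ≤ 0 ≤ RHS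
        have hL0 : B * (e₁ * -A' a₁) ≤ 0 := by
          have : e₁ * -A' a₁ ≤ 0 := mul_nonpos_of_nonneg_of_nonpos he₁pos.le (by linarith)
          nlinarith
        have hR0 : 0 ≤ B * (e₂ * -A' a₂) := by
          have : 0 ≤ e₂ * -A' a₂ := mul_nonneg he₂pos.le (by linarith)
          nlinarith
        nlinarith
      · -- A' a₂ > 0 : A increasing on [a₁,a₂], e₂ ≤ e₁
        have hAc : A' a₂ ≤ A' c := hA' hc.2.le
        have hAlt : A a₁ < A a₂ := by nlinarith
        have he : e₂ ≤ e₁ := Real.exp_le_exp.2 (by linarith)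
        have h3 : e₂ * (1 + B * e₁) ≤ e₁ * (1 + B * e₂) := by nlinarith
        have := mul_le_mul hA'12 h3 (by positivity) (by linarith)
        nlinarith
  linarith
end

section
/- For the Mag-CosFace loss: if m : [l_a, u_a] → ℝ is convex (m'' ≥ 0) and g is strictly convex, B > 0, s > 0, λ > 0, then L(a) = log(1 + B·e^{-s(cos θ − m(a))}) + λ·g(a) is strictly convex in a on [l_a, u_a]. -/
open Real Set

lemma haux_convex (s B c : ℝ) (hs : 0 < s) (hB : 0 < B) :
    ConvexOn ℝ univ (fun t => Real.log (1 + B * Real.exp (s * t - c))) := by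
  have hd : ∀ t : ℝ, 0 < 1 + B * Real.exp (s * t - c) := fun t => by positivity
  refine convexOn_of_hasDerivWithinAt2_nonneg (f' := fun x =>
      s * (B * Real.exp (s * x - c)) / (1 + B * Real.exp (s * x - c)))
    (f'' := fun x => s ^ 2 * (B * Real.exp (s * x - c)) / (1 + B * Real.exp (s * x - c)) ^ 2)
    convex_univ (ContinuousOn.log (Continuous.continuousOn (by continuity)) (fun x _ => (hd x).ne')) ?_ ?_ ?_
  · intro x _
    have h1 : HasDerivAt (fun x : ℝ => s * x - c) s x := by
      simpa using ((hasDerivAt_id x).const_mul s).sub_const c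
    have h2 : HasDerivAt (fun x : ℝ => 1 + B * Real.exp (s * x - c))
        (B * (Real.exp (s * x - c) * s)) x := ((h1.exp).const_mul B).const_add 1
    have h3 := h2.log (hd x).ne'
    have : B * (Real.exp (s * x - c) * s) / (1 + B * Real.exp (s * x - c))
        = s * (B * Real.exp (s * x - c)) / (1 + B * Real.exp (s * x - c)) := by ring
    exact ((this ▸ h3)).hasDerivWithinAt
  · intro x _
    have h1 : HasDerivAt (fun x : ℝ => s * x - c) s x := by
      simpa using ((hasDerivAt_id x).const_mul s).sub_const c
    have hn : HasDerivAt (fun x : ℝ => s * (B * Real.exp (s * x - c)))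
        (s * (B * (Real.exp (s * x - c) * s))) x := ((h1.exp).const_mul B).const_mul s
    have hden : HasDerivAt (fun x : ℝ => 1 + B * Real.exp (s * x - c))
        (B * (Real.exp (s * x - c) * s)) x := ((h1.exp).const_mul B).const_add 1
    have h4 := hn.div hden (hd x).ne'
    have heq : (s * (B * (Real.exp (s * x - c) * s)) * (1 + B * Real.exp (s * x - c)) -
        s * (B * Real.exp (s * x - c)) * (B * (Real.exp (s * x - c) * s))) /
        (1 + B * Real.exp (s * x - c)) ^ 2
        = s ^ 2 * (B * Real.exp (s * x - c)) / (1 + B * Real.exp (s * x - c)) ^ 2 := by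
      ring
    exact (heq ▸ h4).hasDerivWithinAt
  · intro x _
    positivity

lemma haux_mono (s B c : ℝ) (hs : 0 < s) (hB : 0 < B) :
    Monotone (fun t => Real.log (1 + B * Real.exp (s * t - c))) := by
  intro a b hab
  have : (0:ℝ) < 1 + B * Real.exp (s * a - c) := by positivity
  apply Real.log_le_log this
  gcongr

theorem stmt13 (la ua s B lam θ : ℝ) (m g : ℝ → ℝ)
    (hlu : la < ua) (hs : 0 < s) (hB : 0 < B) (hlam : 0 < lam)
    (hmconv : ConvexOn ℝ (Icc la ua) m)
    (hgconv : StrictConvexOn ℝ (Icc la ua) g) :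
    StrictConvexOn ℝ (Icc la ua)
      (fun a => Real.log (1 + B * Real.exp (-(s * (Real.cos θ - m a)))) + lam * g a) := by
  set c : ℝ := s * Real.cos θ with hc
  have hrw : ∀ a : ℝ, -(s * (Real.cos θ - m a)) = s * m a - c := fun a => by
    rw [hc]; ring
  have hconv := haux_convex s B c hs hB
  have hmono := haux_mono s B c hs hB
  -- convexity of the composition
  have hcomp : ConvexOn ℝ (Icc la ua)
      (fun a => Real.log (1 + B * Real.exp (-(s * (Real.cos θ - m a))))) := by
    refine ⟨convex_Icc _ _, ?_⟩
    intro x hx y hy α β hα hβ hab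
    simp only [hrw, smul_eq_mul]
    calc Real.log (1 + B * Real.exp (s * m (α * x + β * y) - c))
        ≤ Real.log (1 + B * Real.exp (s * (α * m x + β * m y) - c)) := by
          apply hmono
          simpa [smul_eq_mul] using hmconv.2 hx hy hα hβ hab
      _ ≤ α * Real.log (1 + B * Real.exp (s * m x - c)) +
          β * Real.log (1 + B * Real.exp (s * m y - c)) := by
          simpa [smul_eq_mul] using hconv.2 (mem_univ (m x)) (mem_univ (m y)) hα hβ hab
  -- strict convexity of lam * g
  have hsg : StrictConvexOn ℝ (Icc la ua) (fun a => lam * g a) := by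
    refine ⟨hgconv.1, ?_⟩
    intro x hx y hy hne α β hα hβ hab
    have := hgconv.2 hx hy hne hα hβ hab
    simp only [smul_eq_mul] at this ⊢
    nlinarith
  exact hcomp.add_strictConvexOn hsg
end
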